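/- For any well-ordered class C, the canonical tree on C (all strictly descending finite sequences of elements of C) has no infinite path, and the set it codes is the ordinal of the well-order: the decoding of the node given by a descending sequence ending in c is the ordinal corresponding to c's position, and the root decodes to the order type of C. -/

import Mathlib

universe u

/-- `τ` is a daughter of `σ` in the tree `T`: it extends `σ` by one entry. -/
def Daughter {C : Type u} (T : Set (List C)) (τ σ : List C) : Prop :=
  τ ∈ T ∧ ∃ c : C, τ = σ ++ [c]

/-- Decoding of the nodes of a well-founded tree: a node decodes to the set of
decodings of its daughters. -/
noncomputable def decode {C : Type u} (T : Set (List C))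
    (hwf : WellFounded (Daughter T)) : List C → PSet.{u} :=
  hwf.fix fun σ ih =>
    PSet.mk {c : C // σ ++ [c] ∈ T} fun c => ih (σ ++ [c.1]) ⟨c.2, c.1, rfl⟩

/-- The von Neumann set (as a pre-set) corresponding to an ordinal. -/
noncomputable def vNp : Ordinal.{u} → PSet.{u} :=
  Ordinal.lt_wf.fix (C := fun _ => PSet.{u}) fun o ih =>
    PSet.mk o.ToType fun i =>
      ih (@Ordinal.typein o.ToType (· < ·) isWellOrder_lt i) (Ordinal.typein_lt_self i)

/-- The von Neumann ZF-set corresponding to an ordinal. -/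
noncomputable def vN (o : Ordinal.{u}) : ZFSet.{u} := ZFSet.mk (vNp o)

/-!
Rank a node of the canonical tree by the position of its last entry, the root getting the
order type itself. A one-entry extension `σ ++ [c]` lies in the tree exactly when `c` sits
below the rank of `σ`, so ranks strictly decrease from a node to its daughters, which gives
well-foundedness. The daughters of a node of rank `β` thus correspond to the elements of
position `< β`, and well-founded induction shows that every node decodes to the von Neumann
ordinal of its rank.
-/

open Ordinal

theorem PSet.mk_equiv_mk_of_equiv {β γ : Type u} {f : β → PSet.{u}} {g : γ → PSet.{u}}
    (e : β ≃ γ) (h : ∀ b, (f b).Equiv (g (e b))) : (PSet.mk β f).Equiv (PSet.mk γ g) :=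
  ⟨fun b => ⟨e b, h b⟩, fun c => ⟨e.symm c, by simpa using h (e.symm c)⟩⟩

theorem decode_eq_mk {C : Type u} (T : Set (List C)) (hwf : WellFounded (Daughter T))
    (σ : List C) :
    decode T hwf σ = PSet.mk {c : C // σ ++ [c] ∈ T} fun c => decode T hwf (σ ++ [c.1]) :=
  hwf.fix_eq _ σ

theorem vNp_eq_mk (o : Ordinal.{u}) :
    vNp o = PSet.mk o.ToType fun i => vNp (typein (α := o.ToType) (· < ·) i) :=
  Ordinal.lt_wf.fix_eq _ o

def canonicalTree (α : Type u) [LT α] : Set (List α) := {σ | σ.IsChain (· > ·)}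

section WellOrder

variable {α : Type u} [LinearOrder α] [WellFoundedLT α]

theorem vNp_equiv_mk_typein_lt {b : Ordinal.{u}} (hb : b ≤ typeLT α) :
    (vNp b).Equiv (PSet.mk {a : α // typein (α := α) (· < ·) a < b}
      fun a => vNp (typein (α := α) (· < ·) a.1)) := by
  rw [vNp_eq_mk]
  constructor
  · intro i
    have hi : typein (α := b.ToType) (· < ·) i < b := typein_lt_self i
    refine ⟨⟨enum (α := α) (· < ·) ⟨typein (α := b.ToType) (· < ·) i, hi.trans_le hb⟩,
      by rwa [typein_enum]⟩, ?_⟩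
    simp only [typein_enum]
    exact PSet.Equiv.rfl
  · rintro ⟨a, ha⟩
    refine ⟨ToType.mk ⟨typein (α := α) (· < ·) a, ha⟩, ?_⟩
    change (vNp (ToType.mk.symm (ToType.mk ⟨typein (α := α) (· < ·) a, ha⟩)).1).Equiv _
    rw [OrderIso.symm_apply_apply]

noncomputable def nodeRank (σ : List α) : Ordinal.{u} :=
  σ.getLast?.elim (typeLT α) (typein (α := α) (· < ·))

@[simp] theorem nodeRank_nil : nodeRank ([] : List α) = typeLT α := rfl

@[simp] theorem nodeRank_concat (σ : List α) (c : α) :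
    nodeRank (σ ++ [c]) = typein (α := α) (· < ·) c := by
  simp [nodeRank]

theorem nodeRank_le_type (σ : List α) : nodeRank σ ≤ typeLT α := by
  unfold nodeRank
  cases σ.getLast? with
  | none => exact le_rfl
  | some c => exact (typein_lt_type _ c).le

theorem concat_mem_canonicalTree_iff {σ : List α} {c : α} :
    σ ++ [c] ∈ canonicalTree α ↔
      σ ∈ canonicalTree α ∧ typein (α := α) (· < ·) c < nodeRank σ := by
  simp only [canonicalTree, Set.mem_ofPred_eq, List.isChain_append, List.isChain_singleton,
    true_and, List.head?_cons, Option.mem_def, Option.some.injEq, forall_eq', nodeRank]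
  cases σ.getLast? <;> simp [typein_lt_type]

theorem wellFounded_daughter_canonicalTree : WellFounded (Daughter (canonicalTree α)) :=
  Subrelation.wf (r := InvImage (· < ·) nodeRank)
    (by
      rintro _ σ ⟨hτ, c, rfl⟩
      simpa [InvImage] using (concat_mem_canonicalTree_iff.mp hτ).2)
    (InvImage.wf _ Ordinal.lt_wf)

theorem decode_canonicalTree_equiv_vNp_nodeRank
    (hwf : WellFounded (Daughter (canonicalTree α))) {σ : List α}
    (hσ : σ ∈ canonicalTree α) : (decode _ hwf σ).Equiv (vNp (nodeRank σ)) := by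
  induction σ using hwf.induction with
  | _ σ ih =>
  have hmem (c : α) :
      σ ++ [c] ∈ canonicalTree α ↔ typein (α := α) (· < ·) c < nodeRank σ := by
    simp [concat_mem_canonicalTree_iff, hσ]
  rw [decode_eq_mk]
  refine (PSet.mk_equiv_mk_of_equiv (Equiv.subtypeEquivRight hmem) fun c => ?_).trans
    (vNp_equiv_mk_typein_lt (nodeRank_le_type σ)).symm
  simpa using ih _ ⟨c.2, c, rfl⟩ c.2

end WellOrder

/-- The canonical tree on a well order (all strictly descending finite sequences) has no
infinite path, and its root decodes to the von Neumann ordinal of the order type. -/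
theorem canonical_tree_decodes_ordinal (o : Ordinal.{u}) :
    WellFounded (Daughter {σ : List o.ToType | σ.Chain' (· > ·)}) ∧
      ∀ hwf : WellFounded (Daughter {σ : List o.ToType | σ.Chain' (· > ·)}),
        ZFSet.mk (decode _ hwf []) = vN o := by
  refine ⟨wellFounded_daughter_canonicalTree, fun hwf => ZFSet.sound ?_⟩
  have hroot := decode_canonicalTree_equiv_vNp_nodeRank hwf (σ := []) List.isChain_nil
  rwa [nodeRank_nil, type_toType] at hroot
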